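/- In the post-source-switch ABF evolution, any node i not yet reached by either wave — i.e., with d(0,i) ≥ t and d(D-1,i) ≥ t — retains its old correct distance: d̂_i(t) = d(D-1,i). -/

import Mathlib

/-!
Induction on `t`. If `i` is at distance at least `t + 1` from both sources, every neighbour of `i`
is at distance at least `t` from both, so by induction it still holds its old value `d(o, j)`;
since `i ≠ z` it takes one Bellman–Ford step, and the exact distances to `o` are fixed by that
step at every vertex other than `o`.
-/

namespace SimpleGraph

variable {V : Type*} {G : SimpleGraph V}

lemma Adj.dist_le_dist_add_one {v w : V} (h : G.Adj v w) (u : V) :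
    G.dist u w ≤ G.dist u v + 1 := by
  simpa [dist_eq_one_iff_adj.mpr h] using h.reachable.dist_triangle_right u

lemma exists_adj_dist_add_one_eq {u v : V} (h : G.dist u v ≠ 0) :
    ∃ w, G.Adj v w ∧ G.dist u w + 1 = G.dist u v := by
  obtain ⟨p, hp⟩ := exists_walk_of_dist_ne_zero h
  have hnil : ¬p.Nil := Walk.length_eq_zero_iff.not.mp (by omega)
  refine ⟨p.penultimate, (p.adj_penultimate hnil).symm, le_antisymm ?_ ?_⟩
  · have := dist_le p.dropLast
    rw [Walk.length_dropLast] at this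
    omega
  · exact (p.adj_penultimate hnil).dist_le_dist_add_one u

lemma one_add_inf'_neighborFinset_dist [Fintype V] [DecidableRel G.Adj] {u v : V}
    (hne : (G.neighborFinset v).Nonempty) (h : G.dist u v ≠ 0) :
    1 + (G.neighborFinset v).inf' hne (G.dist u) = G.dist u v := by
  obtain ⟨w, hw, hdist⟩ := exists_adj_dist_add_one_eq h
  have hle : (G.neighborFinset v).inf' hne (G.dist u) ≤ G.dist u w :=
    Finset.inf'_le _ ((G.mem_neighborFinset v w).mpr hw)
  obtain ⟨w', hw', hmin⟩ := Finset.exists_mem_eq_inf' hne (G.dist u)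
  have hge := ((G.mem_neighborFinset v w').mp hw').symm.dist_le_dist_add_one u
  omega

end SimpleGraph

open SimpleGraph

theorem abf_switch_untouched_region_general {V : Type*} [Fintype V]
    (G : SimpleGraph V) [DecidableRel G.Adj] (z o : V)
    (hne : ∀ i : V, (G.neighborFinset i).Nonempty)
    (dh : ℕ → V → ℕ)
    (hinit : ∀ i, dh 0 i = G.dist o i)
    (hupd : ∀ t, 1 ≤ t → ∀ i, i ≠ z →
      dh t i = 1 + (G.neighborFinset i).inf' (hne i) (fun j => dh (t - 1) j)) :
    ∀ t, 1 ≤ t → ∀ i, t ≤ G.dist z i → t ≤ G.dist o i → dh t i = G.dist o i := by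
  suffices h : ∀ t i, t ≤ G.dist z i → t ≤ G.dist o i → dh t i = G.dist o i from
    fun t _ => h t
  intro t
  induction t with
  | zero => exact fun i _ _ => hinit i
  | succ t ih =>
    intro i hzi hoi
    have hiz : i ≠ z := by
      rintro rfl
      simp at hzi
    have hnbr : ∀ j ∈ G.neighborFinset i, dh t j = G.dist o j := fun j hj =>
      have hji := ((G.mem_neighborFinset i j).mp hj).symm
      ih j (by have := hji.dist_le_dist_add_one z; omega)
        (by have := hji.dist_le_dist_add_one o; omega)
    rw [hupd (t + 1) t.succ_pos i hiz, Nat.add_sub_cancel, Finset.inf'_congr (hne i) rfl hnbr]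
    exact one_add_inf'_neighborFinset_dist (hne i) (by omega)

/-- Source switch from old source `o` to new source `z` with `d(z,o) ≥ 3`:
any node not yet reached by either wave, i.e. with `d(z,i) ≥ t` and
`d(o,i) ≥ t`, retains its old correct distance: `d̂_i(t) = d(o,i)`. -/
theorem abf_switch_untouched_region {V : Type*} [Fintype V] [DecidableEq V]
    (G : SimpleGraph V) [DecidableRel G.Adj] (hconn : G.Connected) (z o : V)
    (hzo : 3 ≤ G.dist z o)
    (hne : ∀ i : V, (G.neighborFinset i).Nonempty)
    (dh : ℕ → V → ℕ)
    (hinit : ∀ i, dh 0 i = G.dist o i)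
    (hsrc : ∀ t, 1 ≤ t → dh t z = 0)
    (hupd : ∀ t, 1 ≤ t → ∀ i, i ≠ z →
      dh t i = 1 + (G.neighborFinset i).inf' (hne i) (fun j => dh (t - 1) j)) :
    ∀ t, 1 ≤ t → ∀ i, t ≤ G.dist z i → t ≤ G.dist o i → dh t i = G.dist o i :=
  abf_switch_untouched_region_general G z o hne dh hinit hupd
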